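/- Assume there exists a finite positive Borel measure dA on [0,1], with α[u] := ∫₀¹ u(t) dA(t) and 𝒦(s) := ∫₀¹ k(t,s) dA(t), such that α[γ] < 1, H[u] ≤ α[u] for every u ∈ K, and f(t,u) < m_α |u| for every t ∈ [0,1] and every u ∈ ℝ with u ≠ 0, where 1/m_α := sup_{t∈[0,1]} { |γ(t)|/(1−α[γ]) · ∫₀¹ 𝒦(s) g(s) ds + ∫₀¹ |k(t,s)| g(s) ds }. Then the only solution of u = Tu in K is the zero function: if u ∈ K and u = Tu, then u = 0. -/

import Mathlib

open MeasureTheory Set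

/-- Supremum norm of `u` on `[0,1]`. -/
noncomputable def nrm (u : ℝ → ℝ) : ℝ := sSup ((fun t => |u t|) '' Icc (0:ℝ) 1)

/-- Minimum (infimum) of `u` on `[a,b]`. -/
noncomputable def minOnIcc (u : ℝ → ℝ) (a b : ℝ) : ℝ := sInf (u '' Icc a b)

/-- The perturbed Hammerstein operator `Tu(t) = γ(t)H[u] + ∫₀¹ k(t,s)g(s)f(s,u(s)) ds`. -/
noncomputable def Tham (k : ℝ → ℝ → ℝ) (g : ℝ → ℝ) (f : ℝ → ℝ → ℝ) (γ : ℝ → ℝ)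
    (H : (ℝ → ℝ) → ℝ) (u : ℝ → ℝ) (t : ℝ) : ℝ :=
  γ t * H u + ∫ s in (0:ℝ)..1, k t s * g s * f s (u s)

/-!
Suppose `u = Tu` with `r = ‖u‖ > 0` and put `ψ(s) = f(s, u(s))`, so that `0 ≤ ψ < m_α r` a.e.
(at zeros of `u` because `f(s, 0) ≤ 0` by continuity). Integrating the fixed-point equation
against `dA` and using `H[u] ≤ α[u]` gives `(1 - α[γ]) H[u] ≤ ∫ 𝒦 g ψ`, hence
`|u(t)| ≤ ∫ w_t ψ` with `w_t = |γ(t)| / (1 - α[γ]) 𝒦 g + |k(t, ·)| g`. The weight `w_t` is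
nonnegative although `k` may change sign: `α` is nonnegative on the cone, which contains every
`t ↦ ∫_E k(t, s) g(s) ds`, so `∫_E 𝒦 g ≥ 0` for all `E`. At a maximum point `t₀` of `|u|` this
gives `r ≤ ∫ w_t₀ ψ < m_α r ∫ w_t₀ ≤ r`, strictly because `ψ < m_α r` a.e.
-/

open Filter Topology

section SupNorm

variable {v : ℝ → ℝ}

lemma abs_le_nrm (hv : ContinuousOn v (Icc 0 1)) {t : ℝ} (ht : t ∈ Icc (0:ℝ) 1) :
    |v t| ≤ nrm v :=
  le_csSup (isCompact_Icc.image_of_continuousOn hv.abs).bddAbove (mem_image_of_mem _ ht)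

lemma nrm_le {B : ℝ} (h : ∀ t ∈ Icc (0:ℝ) 1, |v t| ≤ B) : nrm v ≤ B :=
  csSup_le ((nonempty_Icc.2 zero_le_one).image _) (forall_mem_image.2 h)

lemma nrm_nonneg (hv : ContinuousOn v (Icc 0 1)) : 0 ≤ nrm v :=
  (abs_nonneg _).trans (abs_le_nrm hv (left_mem_Icc.2 zero_le_one))

lemma exists_abs_eq_nrm (hv : ContinuousOn v (Icc 0 1)) : ∃ t ∈ Icc (0:ℝ) 1, |v t| = nrm v :=
  (isCompact_Icc.image_of_continuousOn hv.abs).sSup_mem ((nonempty_Icc.2 zero_le_one).image _)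

lemma le_minOnIcc {a b m : ℝ} (hab : a ≤ b) (h : ∀ t ∈ Icc a b, m ≤ v t) : m ≤ minOnIcc v a b :=
  le_csInf ((nonempty_Icc.2 hab).image _) (forall_mem_image.2 h)

end SupNorm

lemma apply_zero_nonpos_of_le_mul_abs {φ : ℝ → ℝ} {m : ℝ} (hφ : Continuous φ)
    (h : ∀ x ≠ 0, φ x ≤ m * |x|) : φ 0 ≤ 0 := by
  have hlim : Tendsto (fun x : ℝ => m * |x|) (𝓝[≠] 0) (𝓝 0) :=
    ((continuous_const.mul continuous_abs).tendsto' 0 0 (by simp)).mono_left nhdsWithin_le_nhds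
  exact le_of_tendsto_of_tendsto (hφ.continuousAt.tendsto.mono_left nhdsWithin_le_nhds) hlim
    (eventually_nhdsWithin_of_forall h)

lemma apply_lt_mul_of_lt_mul_abs {φ : ℝ → ℝ} {m r x : ℝ} (hφ : Continuous φ)
    (h : ∀ y ≠ 0, φ y < m * |y|) (hm : 0 ≤ m) (hmr : 0 < m * r) (hx : |x| ≤ r) : φ x < m * r := by
  rcases eq_or_ne x 0 with rfl | hx0
  · exact (apply_zero_nonpos_of_le_mul_abs hφ fun y hy => (h y hy).le).trans_lt hmr
  · exact (h x hx0).trans_le (mul_le_mul_of_nonneg_left hx hm)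

lemma aemeasurable_comp_of_ae_continuous {α : Type*} [MeasurableSpace α] {μ : Measure α}
    {f : α → ℝ → ℝ} {u : α → ℝ} (hf_meas : ∀ x, Measurable fun t => f t x)
    (hf_cont : ∀ᵐ t ∂μ, Continuous (f t)) (hu : AEMeasurable u μ) :
    AEMeasurable (fun t => f t (u t)) μ := by
  classical
  obtain ⟨N, hN, hN_meas, hN_null⟩ := exists_measurable_superset_of_null (ae_iff.1 hf_cont)
  set f' : α → ℝ → ℝ := fun t x => if t ∈ N then 0 else f t x
  have hf'_cont (t : α) : Continuous (f' t) := by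
    by_cases ht : t ∈ N
    · simpa only [f', ht, if_true] using continuous_const
    · simpa only [f', ht, if_false] using not_not.1 fun h => ht (hN h)
  have hf' : Measurable (Function.uncurry fun x t => f' t x) :=
    measurable_uncurry_of_continuous_of_measurable hf'_cont
      fun x => Measurable.ite hN_meas measurable_const (hf_meas x)
  obtain ⟨u', hu'_meas, hu'⟩ := hu
  refine ⟨fun t => f' t (u' t), hf'.comp (hu'_meas.prodMk measurable_id), ?_⟩
  filter_upwards [hu', measure_eq_zero_iff_ae_notMem.1 hN_null] with t ht htN
  simp only [f', if_neg htN, ht]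

lemma integral_mul_lt_mul_integral {α : Type*} [MeasurableSpace α] {μ : Measure α}
    {w ψ : α → ℝ} {M : ℝ} (hw : 0 ≤ᵐ[μ] w) (hw_int : Integrable w μ) (hψ : ∀ᵐ x ∂μ, ψ x < M)
    (hwψ : Integrable (fun x => w x * ψ x) μ) (hpos : 0 < ∫ x, w x * ψ x ∂μ) :
    ∫ x, w x * ψ x ∂μ < M * ∫ x, w x ∂μ := by
  by_contra! hle
  have hgap_int : Integrable (fun x => w x * (M - ψ x)) μ := by
    refine ((hw_int.const_mul M).sub hwψ).congr (.of_forall fun x => ?_)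
    simp only [Pi.sub_apply]
    ring
  have hgap_nonneg : 0 ≤ᵐ[μ] fun x => w x * (M - ψ x) := by
    filter_upwards [hw, hψ] with x hwx hψx using mul_nonneg hwx (sub_pos.2 hψx).le
  have hgap : ∫ x, w x * (M - ψ x) ∂μ = 0 := by
    refine le_antisymm ?_ (integral_nonneg_of_ae hgap_nonneg)
    simp only [mul_sub]
    rw [integral_sub (hw_int.mul_const M) hwψ, integral_mul_const]
    linarith
  have hw0 : w =ᵐ[μ] 0 := by
    filter_upwards [(integral_eq_zero_iff_of_nonneg_ae hgap_nonneg hgap_int).1 hgap, hψ]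
      with x hx hψx
    exact (mul_eq_zero.1 hx).resolve_right (sub_pos.2 hψx).ne'
  have : ∫ x, w x * ψ x ∂μ = 0 :=
    integral_eq_zero_of_ae (by filter_upwards [hw0] with x hx; simp [hx])
  linarith

lemma ae_norm_mul_le_of_abs_le {Y : Type*} [MeasurableSpace Y] {ν : Measure Y} {a Φ h : Y → ℝ}
    (ha : ∀ᵐ y ∂ν, |a y| ≤ Φ y) : ∀ᵐ y ∂ν, ‖a y * h y‖ ≤ ‖Φ y * h y‖ := by
  filter_upwards [ha] with y hy
  simp only [norm_mul, Real.norm_eq_abs]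
  exact mul_le_mul_of_nonneg_right (hy.trans (le_abs_self _)) (abs_nonneg _)

section KernelOperator

variable {X Y : Type*} [MeasurableSpace X] [MeasurableSpace Y] {μ : Measure X} {ν : Measure Y}
  {k : X → Y → ℝ} {Φ h : Y → ℝ}

lemma integrable_kernel_mul {x : X} (hk : Measurable (Function.uncurry k))
    (hx : ∀ᵐ y ∂ν, |k x y| ≤ Φ y) (hh : AEStronglyMeasurable h ν)
    (hΦh : Integrable (fun y => Φ y * h y) ν) : Integrable (fun y => k x y * h y) ν :=
  hΦh.norm.mono' ((hk.comp measurable_prodMk_left).aestronglyMeasurable.mul hh)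
    (ae_norm_mul_le_of_abs_le hx)

lemma integrable_abs_kernel_mul {x : X} (hk : Measurable (Function.uncurry k))
    (hx : ∀ᵐ y ∂ν, |k x y| ≤ Φ y) (hh : AEStronglyMeasurable h ν)
    (hΦh : Integrable (fun y => Φ y * h y) ν) : Integrable (fun y => |k x y| * h y) ν :=
  integrable_kernel_mul (k := fun x y => |k x y|) hk.abs (by simpa only [abs_abs] using hx) hh hΦh

variable [IsFiniteMeasure μ] [SFinite ν]

lemma integrable_prod_kernel_mul (hk : Measurable (Function.uncurry k))
    (hkΦ : ∀ᵐ x ∂μ, ∀ᵐ y ∂ν, |k x y| ≤ Φ y) (hh : AEStronglyMeasurable h ν)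
    (hΦh : Integrable (fun y => Φ y * h y) ν) :
    Integrable (fun p : X × Y => k p.1 p.2 * h p.2) (μ.prod ν) := by
  have hmeas : AEStronglyMeasurable (fun p : X × Y => k p.1 p.2 * h p.2) (μ.prod ν) :=
    hk.aestronglyMeasurable.mul hh.comp_snd
  refine (integrable_prod_iff hmeas).2 ⟨?_, ?_⟩
  · filter_upwards [hkΦ] with x hx using integrable_kernel_mul hk hx hh hΦh
  · refine (integrable_const (∫ y, ‖Φ y * h y‖ ∂ν)).mono' hmeas.norm.integral_prod_right' ?_
    filter_upwards [hkΦ] with x hx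
    rw [Real.norm_of_nonneg (integral_nonneg fun _ => norm_nonneg _)]
    exact integral_mono_of_nonneg (.of_forall fun _ => norm_nonneg _) hΦh.norm
      (ae_norm_mul_le_of_abs_le hx)

lemma integrable_integral_kernel_mul (hk : Measurable (Function.uncurry k))
    (hkΦ : ∀ᵐ x ∂μ, ∀ᵐ y ∂ν, |k x y| ≤ Φ y) (hh : AEStronglyMeasurable h ν)
    (hΦh : Integrable (fun y => Φ y * h y) ν) :
    Integrable (fun y => (∫ x, k x y ∂μ) * h y) ν := by
  simpa only [integral_mul_const] using
    (integrable_prod_kernel_mul hk hkΦ hh hΦh).integral_prod_right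

lemma integral_integral_kernel_mul (hk : Measurable (Function.uncurry k))
    (hkΦ : ∀ᵐ x ∂μ, ∀ᵐ y ∂ν, |k x y| ≤ Φ y) (hh : AEStronglyMeasurable h ν)
    (hΦh : Integrable (fun y => Φ y * h y) ν) :
    ∫ x, (∫ y, k x y * h y ∂ν) ∂μ = ∫ y, (∫ x, k x y ∂μ) * h y ∂ν := by
  rw [integral_integral_swap (integrable_prod_kernel_mul hk hkΦ hh hΦh)]
  simp_rw [integral_mul_const]

end KernelOperator

lemma intervalIntegral_eq_integral_Icc {a b : ℝ} (hab : a ≤ b) (F : ℝ → ℝ) :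
    ∫ s in a..b, F s = ∫ s in Icc a b, F s := by
  rw [intervalIntegral.integral_of_le hab, integral_Icc_eq_integral_Ioc]

namespace Hammerstein

def cone (c a b : ℝ) : Set (ℝ → ℝ) :=
  {u | ContinuousOn u (Icc (0:ℝ) 1) ∧ c * nrm u ≤ minOnIcc u a b}

noncomputable def invMAlpha (k : ℝ → ℝ → ℝ) (g γ : ℝ → ℝ) (μA : Measure ℝ) : ℝ :=
  sSup ((fun t' => |γ t'| / (1 - ∫ t'', γ t'' ∂μA) *
    (∫ s in (0:ℝ)..1, (∫ t'', k t'' s ∂μA) * g s) + ∫ s in (0:ℝ)..1, |k t' s| * g s) '' Icc (0:ℝ) 1)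

noncomputable def weight (k : ℝ → ℝ → ℝ) (g γ : ℝ → ℝ) (μA : Measure ℝ) (t s : ℝ) : ℝ :=
  |γ t| / (1 - ∫ t', γ t' ∂μA) * ((∫ t', k t' s ∂μA) * g s) + |k t s| * g s

local notation "ν" => volume.restrict (Icc (0:ℝ) 1)

variable {k : ℝ → ℝ → ℝ} {Φ g h γ : ℝ → ℝ} {μA : Measure ℝ}

lemma continuousOn_integral_kernel_mul (hk_meas : Measurable (Function.uncurry k))
    (hk_cont : ∀ τ ∈ Icc (0:ℝ) 1, ∀ᵐ s ∂ν,
      Tendsto (fun t => |k t s - k τ s|) (𝓝[Icc (0:ℝ) 1] τ) (𝓝 0))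
    (hkΦ : ∀ t ∈ Icc (0:ℝ) 1, ∀ᵐ s ∂ν, |k t s| ≤ Φ s)
    (hh : AEStronglyMeasurable h ν) (hΦh : Integrable (fun s => Φ s * h s) ν) :
    ContinuousOn (fun t => ∫ s in Icc (0:ℝ) 1, k t s * h s) (Icc (0:ℝ) 1) := by
  intro τ hτ
  refine continuousWithinAt_of_dominated
    (.of_forall fun t => (hk_meas.comp measurable_prodMk_left).aestronglyMeasurable.mul hh)
    ?_ hΦh.norm ?_
  · filter_upwards [self_mem_nhdsWithin] with t ht using ae_norm_mul_le_of_abs_le (hkΦ t ht)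
  · filter_upwards [hk_cont τ hτ] with s hs
    exact (tendsto_iff_dist_tendsto_zero.2 (by simpa only [Real.dist_eq] using hs)).mul_const _

lemma integral_kernel_mul_mem_cone {a b c c₁ : ℝ} (hk_meas : Measurable (Function.uncurry k))
    (hk_cont : ∀ τ ∈ Icc (0:ℝ) 1, ∀ᵐ s ∂ν,
      Tendsto (fun t => |k t s - k τ s|) (𝓝[Icc (0:ℝ) 1] τ) (𝓝 0))
    (ha : 0 ≤ a) (hab : a ≤ b) (hb : b ≤ 1) (hc₁ : 0 ≤ c₁) (hc : c ≤ c₁)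
    (hkΦ_abs : ∀ t ∈ Icc (0:ℝ) 1, ∀ᵐ s ∂ν, |k t s| ≤ Φ s)
    (hkΦ_low : ∀ t ∈ Icc a b, ∀ᵐ s ∂ν, c₁ * Φ s ≤ k t s)
    (hh : AEStronglyMeasurable h ν) (hh_nonneg : 0 ≤ᵐ[ν] h)
    (hΦh : Integrable (fun s => Φ s * h s) ν) :
    (fun t => ∫ s in Icc (0:ℝ) 1, k t s * h s) ∈ cone c a b := by
  set M := ∫ s in Icc (0:ℝ) 1, Φ s * h s
  have hcont := continuousOn_integral_kernel_mul hk_meas hk_cont hkΦ_abs hh hΦh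
  have hupper (t : ℝ) (ht : t ∈ Icc (0:ℝ) 1) : |∫ s in Icc (0:ℝ) 1, k t s * h s| ≤ M := by
    rw [← Real.norm_eq_abs]
    refine norm_integral_le_of_norm_le hΦh ?_
    filter_upwards [hkΦ_abs t ht, hh_nonneg] with s hs hhs
    rw [Real.norm_eq_abs, abs_mul, abs_of_nonneg hhs]
    exact mul_le_mul_of_nonneg_right hs hhs
  have hlower (t : ℝ) (ht : t ∈ Icc a b) : c₁ * M ≤ ∫ s in Icc (0:ℝ) 1, k t s * h s := by
    rw [← integral_const_mul]
    refine integral_mono_ae (hΦh.const_mul c₁)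
      (integrable_kernel_mul hk_meas (hkΦ_abs t (Icc_subset_Icc ha hb ht)) hh hΦh) ?_
    filter_upwards [hkΦ_low t ht, hh_nonneg] with s hs hhs
    rw [← mul_assoc]
    exact mul_le_mul_of_nonneg_right hs hhs
  refine ⟨hcont, ?_⟩
  calc c * nrm _ ≤ c₁ * nrm _ := mul_le_mul_of_nonneg_right hc (nrm_nonneg hcont)
    _ ≤ c₁ * M := mul_le_mul_of_nonneg_left (nrm_le hupper) hc₁
    _ ≤ minOnIcc _ a b := le_minOnIcc hab hlower

lemma ae_nonneg_integral_kernel_mul [IsFiniteMeasure μA] {a b c c₁ : ℝ}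
    (hμA : ∀ᵐ t ∂μA, t ∈ Icc (0:ℝ) 1) (hk_meas : Measurable (Function.uncurry k))
    (hk_cont : ∀ τ ∈ Icc (0:ℝ) 1, ∀ᵐ s ∂ν,
      Tendsto (fun t => |k t s - k τ s|) (𝓝[Icc (0:ℝ) 1] τ) (𝓝 0))
    (ha : 0 ≤ a) (hab : a ≤ b) (hb : b ≤ 1) (hc₁ : 0 ≤ c₁) (hc : c ≤ c₁)
    (hkΦ_abs : ∀ t ∈ Icc (0:ℝ) 1, ∀ᵐ s ∂ν, |k t s| ≤ Φ s)
    (hkΦ_low : ∀ t ∈ Icc a b, ∀ᵐ s ∂ν, c₁ * Φ s ≤ k t s)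
    (hg : Measurable g) (hg_nonneg : 0 ≤ᵐ[ν] g) (hΦg : Integrable (fun s => Φ s * g s) ν)
    (hα : ∀ v ∈ cone c a b, 0 ≤ ∫ t, v t ∂μA) :
    0 ≤ᵐ[ν] fun s => (∫ t, k t s ∂μA) * g s := by
  have hkΦ : ∀ᵐ t ∂μA, ∀ᵐ s ∂ν, |k t s| ≤ Φ s := hμA.mono hkΦ_abs
  refine ae_nonneg_of_forall_setIntegral_nonneg
    (integrable_integral_kernel_mul hk_meas hkΦ hg.aestronglyMeasurable hΦg) fun E hE _ => ?_
  have hgE : AEStronglyMeasurable (E.indicator g) ν := (hg.indicator hE).aestronglyMeasurable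
  have hΦgE : Integrable (fun s => Φ s * E.indicator g s) ν :=
    (hΦg.indicator hE).congr (.of_forall fun s => indicator_mul_right _ _ _)
  rw [← integral_indicator hE]
  simp_rw [indicator_mul_right]
  rw [← integral_integral_kernel_mul hk_meas hkΦ hgE hΦgE]
  refine hα _ (integral_kernel_mul_mem_cone hk_meas hk_cont ha hab hb hc₁ hc hkΦ_abs hkΦ_low hgE
    ?_ hΦgE)
  filter_upwards [hg_nonneg] with s hs using indicator_apply_nonneg fun _ => hs

lemma sub_mul_le_integral_kernel_mul [IsFiniteMeasure μA] {u : ℝ → ℝ} {A : ℝ}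
    (hμA : ∀ᵐ t ∂μA, t ∈ Icc (0:ℝ) 1) (hk_meas : Measurable (Function.uncurry k))
    (hkΦ_abs : ∀ t ∈ Icc (0:ℝ) 1, ∀ᵐ s ∂ν, |k t s| ≤ Φ s)
    (hh : AEStronglyMeasurable h ν) (hΦh : Integrable (fun s => Φ s * h s) ν)
    (hγ : ContinuousOn γ (Icc (0:ℝ) 1))
    (hu : ∀ t ∈ Icc (0:ℝ) 1, u t = γ t * A + ∫ s in Icc (0:ℝ) 1, k t s * h s)
    (hA : A ≤ ∫ t, u t ∂μA) :
    (1 - ∫ t, γ t ∂μA) * A ≤ ∫ s in Icc (0:ℝ) 1, (∫ t, k t s ∂μA) * h s := by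
  have hkΦ : ∀ᵐ t ∂μA, ∀ᵐ s ∂ν, |k t s| ≤ Φ s := hμA.mono hkΦ_abs
  have hγ_int : Integrable γ μA := by
    simpa only [IntegrableOn, Measure.restrict_eq_self_of_ae_mem hμA] using
      hγ.integrableOn_compact (μ := μA) isCompact_Icc
  have hαu : ∫ t, u t ∂μA
      = (∫ t, γ t ∂μA) * A + ∫ s in Icc (0:ℝ) 1, (∫ t, k t s ∂μA) * h s := by
    rw [integral_congr_ae (hμA.mono hu), integral_add (hγ_int.mul_const A)
      (integrable_prod_kernel_mul hk_meas hkΦ hh hΦh).integral_prod_left, integral_mul_const,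
      integral_integral_kernel_mul hk_meas hkΦ hh hΦh]
  rw [sub_mul, one_mul]
  linarith

lemma weight_nonneg (hα : ∫ t, γ t ∂μA < 1)
    (h𝒦 : 0 ≤ᵐ[ν] fun s => (∫ t, k t s ∂μA) * g s) (hg_nonneg : 0 ≤ᵐ[ν] g) (t : ℝ) :
    0 ≤ᵐ[ν] weight k g γ μA t := by
  filter_upwards [h𝒦, hg_nonneg] with s h𝒦s hgs
  exact add_nonneg (mul_nonneg (div_nonneg (abs_nonneg _) (sub_pos.2 hα).le) h𝒦s)
    (mul_nonneg (abs_nonneg _) hgs)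

lemma integrable_weight [IsFiniteMeasure μA] (hμA : ∀ᵐ t ∂μA, t ∈ Icc (0:ℝ) 1)
    (hk_meas : Measurable (Function.uncurry k))
    (hkΦ_abs : ∀ t ∈ Icc (0:ℝ) 1, ∀ᵐ s ∂ν, |k t s| ≤ Φ s)
    (hg : AEStronglyMeasurable g ν) (hΦg : Integrable (fun s => Φ s * g s) ν) {t : ℝ}
    (ht : t ∈ Icc (0:ℝ) 1) : Integrable (weight k g γ μA t) ν :=
  ((integrable_integral_kernel_mul hk_meas (hμA.mono hkΦ_abs) hg hΦg).const_mul _).add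
    (integrable_abs_kernel_mul hk_meas (hkΦ_abs t ht) hg hΦg)

lemma integral_weight_le_invMAlpha [IsFiniteMeasure μA] (hμA : ∀ᵐ t ∂μA, t ∈ Icc (0:ℝ) 1)
    (hk_meas : Measurable (Function.uncurry k))
    (hkΦ_abs : ∀ t ∈ Icc (0:ℝ) 1, ∀ᵐ s ∂ν, |k t s| ≤ Φ s)
    (hg : AEStronglyMeasurable g ν) (hg_nonneg : 0 ≤ᵐ[ν] g)
    (hΦg : Integrable (fun s => Φ s * g s) ν) (hγ : ContinuousOn γ (Icc (0:ℝ) 1)) {t : ℝ}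
    (ht : t ∈ Icc (0:ℝ) 1) :
    ∫ s in Icc (0:ℝ) 1, weight k g γ μA t s ≤ invMAlpha k g γ μA := by
  set D := 1 - ∫ t, γ t ∂μA
  set Q := ∫ s in Icc (0:ℝ) 1, (∫ t', k t' s ∂μA) * g s
  have hQ := integrable_integral_kernel_mul hk_meas (hμA.mono hkΦ_abs) hg hΦg
  have hkg (t : ℝ) (ht : t ∈ Icc (0:ℝ) 1) :=
    integrable_abs_kernel_mul hk_meas (hkΦ_abs t ht) hg hΦg
  have hbdd : ∀ t' ∈ Icc (0:ℝ) 1, |γ t'| / D * Q + ∫ s in Icc (0:ℝ) 1, |k t' s| * g s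
      ≤ nrm γ / |D| * |Q| + ∫ s in Icc (0:ℝ) 1, Φ s * g s := by
    intro t' ht'
    refine add_le_add ((le_abs_self _).trans ?_) (integral_mono_ae (hkg t' ht') hΦg ?_)
    · rw [abs_mul, abs_div, abs_abs]
      gcongr
      exact abs_le_nrm hγ ht'
    · filter_upwards [hkΦ_abs t' ht', hg_nonneg] with s hs hgs
      exact mul_le_mul_of_nonneg_right hs hgs
  unfold invMAlpha
  simp only [intervalIntegral_eq_integral_Icc zero_le_one]
  refine le_csSup ⟨_, forall_mem_image.2 hbdd⟩ ⟨t, ht, ?_⟩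
  simp only [weight]
  rw [integral_add (hQ.const_mul _) (hkg t ht), integral_const_mul]

lemma abs_le_integral_weight_mul [IsFiniteMeasure μA] {u ψ : ℝ → ℝ} {A C t : ℝ}
    (hμA : ∀ᵐ t ∂μA, t ∈ Icc (0:ℝ) 1) (hk_meas : Measurable (Function.uncurry k))
    (hkΦ_abs : ∀ t ∈ Icc (0:ℝ) 1, ∀ᵐ s ∂ν, |k t s| ≤ Φ s)
    (hg : AEStronglyMeasurable g ν) (hg_nonneg : 0 ≤ᵐ[ν] g)
    (hΦg : Integrable (fun s => Φ s * g s) ν) (hψ : AEStronglyMeasurable ψ ν)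
    (hψ_nonneg : 0 ≤ᵐ[ν] ψ) (hψ_le : ∀ᵐ s ∂ν, ψ s ≤ C) (hγ : ContinuousOn γ (Icc (0:ℝ) 1))
    (hα : ∫ t, γ t ∂μA < 1) (hA0 : 0 ≤ A) (hA : A ≤ ∫ t, u t ∂μA)
    (hu : ∀ t ∈ Icc (0:ℝ) 1, u t = γ t * A + ∫ s in Icc (0:ℝ) 1, k t s * (g s * ψ s))
    (ht : t ∈ Icc (0:ℝ) 1) :
    |u t| ≤ ∫ s in Icc (0:ℝ) 1, weight k g γ μA t s * ψ s := by
  have hΦgψ : Integrable (fun s => Φ s * (g s * ψ s)) ν := by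
    refine (hΦg.mul_bdd hψ (c := C) ?_).congr (.of_forall fun s => mul_assoc _ _ _)
    filter_upwards [hψ_nonneg, hψ_le] with s h0 hC using (Real.norm_of_nonneg h0).trans_le hC
  have hgψ : AEStronglyMeasurable (fun s => g s * ψ s) ν := hg.mul hψ
  set D := 1 - ∫ t, γ t ∂μA
  set P := ∫ s in Icc (0:ℝ) 1, (∫ t', k t' s ∂μA) * (g s * ψ s)
  have hD : 0 < D := sub_pos.2 hα
  have hDA : D * A ≤ P := sub_mul_le_integral_kernel_mul hμA hk_meas hkΦ_abs hgψ hΦgψ hγ hu hA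
  have hkt := integrable_abs_kernel_mul hk_meas (hkΦ_abs t ht) hgψ hΦgψ
  have hsplit : ∫ s in Icc (0:ℝ) 1, weight k g γ μA t s * ψ s
      = |γ t| / D * P + ∫ s in Icc (0:ℝ) 1, |k t s| * (g s * ψ s) := by
    rw [← integral_const_mul, ← integral_add ((integrable_integral_kernel_mul hk_meas
      (hμA.mono hkΦ_abs) hgψ hΦgψ).const_mul _) hkt]
    refine integral_congr_ae (.of_forall fun s => ?_)
    simp only [weight]
    ring
  have hγA : |γ t| * A ≤ |γ t| / D * P :=
    calc |γ t| * A = |γ t| / D * (D * A) := by field_simp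
      _ ≤ |γ t| / D * P := mul_le_mul_of_nonneg_left hDA (div_nonneg (abs_nonneg _) hD.le)
  have hkt_le : |∫ s in Icc (0:ℝ) 1, k t s * (g s * ψ s)|
      ≤ ∫ s in Icc (0:ℝ) 1, |k t s| * (g s * ψ s) := by
    refine abs_integral_le_integral_abs.trans_eq (integral_congr_ae ?_)
    filter_upwards [hg_nonneg, hψ_nonneg] with s hgs hψs
    rw [abs_mul, abs_of_nonneg (mul_nonneg hgs hψs)]
  rw [hsplit, hu t ht]
  refine (abs_add_le _ _).trans ?_
  rw [abs_mul, abs_of_nonneg hA0]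
  exact add_le_add hγA hkt_le

lemma integral_weight_mul_lt [IsFiniteMeasure μA] {ψ : ℝ → ℝ} {M t : ℝ}
    (hμA : ∀ᵐ t ∂μA, t ∈ Icc (0:ℝ) 1) (hk_meas : Measurable (Function.uncurry k))
    (hkΦ_abs : ∀ t ∈ Icc (0:ℝ) 1, ∀ᵐ s ∂ν, |k t s| ≤ Φ s)
    (hg : AEStronglyMeasurable g ν) (hg_nonneg : 0 ≤ᵐ[ν] g)
    (hΦg : Integrable (fun s => Φ s * g s) ν) (hγ : ContinuousOn γ (Icc (0:ℝ) 1))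
    (hα : ∫ t, γ t ∂μA < 1) (h𝒦 : 0 ≤ᵐ[ν] fun s => (∫ t, k t s ∂μA) * g s)
    (hψ : AEStronglyMeasurable ψ ν) (hψ_nonneg : 0 ≤ᵐ[ν] ψ) (hψ_lt : ∀ᵐ s ∂ν, ψ s < M)
    (hM : 0 ≤ M) (ht : t ∈ Icc (0:ℝ) 1)
    (hpos : 0 < ∫ s in Icc (0:ℝ) 1, weight k g γ μA t s * ψ s) :
    ∫ s in Icc (0:ℝ) 1, weight k g γ μA t s * ψ s < M * invMAlpha k g γ μA := by
  have hw := integrable_weight (γ := γ) hμA hk_meas hkΦ_abs hg hΦg ht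
  have hψ_bdd : ∀ᵐ s ∂ν, ‖ψ s‖ ≤ M := by
    filter_upwards [hψ_nonneg, hψ_lt] with s h0 hM using (Real.norm_of_nonneg h0).trans_le hM.le
  calc ∫ s in Icc (0:ℝ) 1, weight k g γ μA t s * ψ s
      < M * ∫ s in Icc (0:ℝ) 1, weight k g γ μA t s :=
        integral_mul_lt_mul_integral (weight_nonneg hα h𝒦 hg_nonneg t) hw hψ_lt
          (hw.mul_bdd hψ hψ_bdd) hpos
    _ ≤ M * invMAlpha k g γ μA := mul_le_mul_of_nonneg_left
        (integral_weight_le_invMAlpha hμA hk_meas hkΦ_abs hg hg_nonneg hΦg hγ ht) hM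

end Hammerstein

open Hammerstein in
theorem stmt7_general
    (k : ℝ → ℝ → ℝ) (g : ℝ → ℝ) (f : ℝ → ℝ → ℝ) (Φ γ : ℝ → ℝ) (a b c₁ c₂ c : ℝ)
    (H : (ℝ → ℝ) → ℝ) (K : Set (ℝ → ℝ))
    (hk_meas : Measurable (Function.uncurry k))
    (hk_cont : ∀ τ ∈ Icc (0:ℝ) 1, ∀ᵐ s ∂(volume.restrict (Icc (0:ℝ) 1)),
      Filter.Tendsto (fun t => |k t s - k τ s|) (nhdsWithin τ (Icc (0:ℝ) 1)) (nhds 0))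
    (ha : 0 ≤ a) (hab : a ≤ b) (hb : b ≤ 1)
    (hc₁ : c₁ ∈ Ioc (0:ℝ) 1)
    (hkΦ_abs : ∀ t ∈ Icc (0:ℝ) 1, ∀ᵐ s ∂(volume.restrict (Icc (0:ℝ) 1)), |k t s| ≤ Φ s)
    (hkΦ_low : ∀ t ∈ Icc a b, ∀ᵐ s ∂(volume.restrict (Icc (0:ℝ) 1)), c₁ * Φ s ≤ k t s)
    (hg_meas : Measurable g)
    (hg_nonneg : ∀ᵐ s ∂(volume.restrict (Icc (0:ℝ) 1)), 0 ≤ g s)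
    (hgΦ_int : IntegrableOn (fun s => g s * Φ s) (Icc (0:ℝ) 1))
    (hf_meas : ∀ u : ℝ, Measurable (fun t => f t u))
    (hf_cont : ∀ᵐ t ∂(volume.restrict (Icc (0:ℝ) 1)), Continuous (f t))
    (hf_nonneg : ∀ t u : ℝ, 0 ≤ f t u)
    (hγ_cont : ContinuousOn γ (Icc (0:ℝ) 1))
    (hc : c = min c₁ c₂)
    (hK : K = {u : ℝ → ℝ | ContinuousOn u (Icc (0:ℝ) 1) ∧ c * nrm u ≤ minOnIcc u a b})
    (hH_nonneg : ∀ u ∈ K, 0 ≤ H u)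
    (μA : Measure ℝ) (hμA_fin : IsFiniteMeasure μA) (hμA_supp : μA ((Icc (0:ℝ) 1)ᶜ) = 0)
    (hαγ : (∫ t, γ t ∂μA) < 1)
    (hHα : ∀ u ∈ K, H u ≤ ∫ t, u t ∂μA)
    (hf_lt : ∀ t ∈ Icc (0:ℝ) 1, ∀ u : ℝ, u ≠ 0 →
      f t u < (sSup ((fun t' => |γ t'| / (1 - ∫ t'', γ t'' ∂μA) *
        (∫ s in (0:ℝ)..1, (∫ t'', k t'' s ∂μA) * g s) +
        ∫ s in (0:ℝ)..1, |k t' s| * g s) '' Icc (0:ℝ) 1))⁻¹ * |u|) :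
    ∀ u ∈ K, (∀ t ∈ Icc (0:ℝ) 1, u t = Tham k g f γ H u t) →
      ∀ t ∈ Icc (0:ℝ) 1, u t = 0 := by
  change ∀ t ∈ Icc (0:ℝ) 1, ∀ y : ℝ, y ≠ 0 → f t y < (invMAlpha k g γ μA)⁻¹ * |y| at hf_lt
  subst hK
  intro u hu hfix
  simp only [Tham, intervalIntegral_eq_integral_Icc zero_le_one, mul_assoc] at hfix
  set r := nrm u
  suffices r ≤ 0 from fun t ht => abs_nonpos_iff.1 ((abs_le_nrm hu.1 ht).trans this)
  by_contra! hr
  set m := (invMAlpha k g γ μA)⁻¹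
  have hm : 0 < m :=
    (hf_nonneg 0 1).trans_lt (by simpa using hf_lt 0 (left_mem_Icc.2 zero_le_one) 1 one_ne_zero)
  have hμA : ∀ᵐ t ∂μA, t ∈ Icc (0:ℝ) 1 := mem_ae_iff.2 hμA_supp
  have hΦg : IntegrableOn (fun s => Φ s * g s) (Icc (0:ℝ) 1) := by
    simpa only [mul_comm] using hgΦ_int
  set ψ := fun s => f s (u s)
  have hψ : AEStronglyMeasurable ψ (volume.restrict (Icc (0:ℝ) 1)) :=
    (aemeasurable_comp_of_ae_continuous hf_meas hf_cont
      (hu.1.aemeasurable measurableSet_Icc)).aestronglyMeasurable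
  have hψ_lt : ∀ᵐ s ∂(volume.restrict (Icc (0:ℝ) 1)), ψ s < m * r := by
    filter_upwards [hf_cont, ae_restrict_mem measurableSet_Icc] with s hs hsI
    exact apply_lt_mul_of_lt_mul_abs (φ := f s) hs (hf_lt s hsI) hm.le (mul_pos hm hr)
      (abs_le_nrm hu.1 hsI)
  have hψ_nonneg : 0 ≤ᵐ[volume.restrict (Icc (0:ℝ) 1)] ψ := .of_forall fun _ => hf_nonneg _ _
  have h𝒦 := ae_nonneg_integral_kernel_mul hμA hk_meas hk_cont ha hab hb hc₁.1.le
    (hc ▸ min_le_left _ _) hkΦ_abs hkΦ_low hg_meas hg_nonneg hΦg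
    fun v hv => (hH_nonneg v hv).trans (hHα v hv)
  obtain ⟨t₀, ht₀, hut₀⟩ := exists_abs_eq_nrm hu.1
  have h_le : r ≤ ∫ s in Icc (0:ℝ) 1, weight k g γ μA t₀ s * ψ s :=
    hut₀.symm.trans_le <| abs_le_integral_weight_mul hμA hk_meas hkΦ_abs
      hg_meas.aestronglyMeasurable hg_nonneg hΦg hψ hψ_nonneg (hψ_lt.mono fun _ => le_of_lt)
      hγ_cont hαγ (hH_nonneg u hu) (hHα u hu) hfix ht₀
  have h_lt := integral_weight_mul_lt hμA hk_meas hkΦ_abs hg_meas.aestronglyMeasurable hg_nonneg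
    hΦg hγ_cont hαγ h𝒦 hψ hψ_nonneg hψ_lt (mul_pos hm hr).le ht₀ (hr.trans_le h_le)
  have hmS : m * r * invMAlpha k g γ μA = r := by
    rw [mul_comm m, mul_assoc, inv_mul_cancel₀ (inv_pos.1 hm).ne', mul_one]
  linarith

theorem stmt7
    (k : ℝ → ℝ → ℝ) (g : ℝ → ℝ) (f : ℝ → ℝ → ℝ) (Φ γ : ℝ → ℝ) (a b c₁ c₂ c : ℝ)
    (H : (ℝ → ℝ) → ℝ) (K : Set (ℝ → ℝ))
    (hk_meas : Measurable (Function.uncurry k))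
    (hk_cont : ∀ τ ∈ Icc (0:ℝ) 1, ∀ᵐ s ∂(volume.restrict (Icc (0:ℝ) 1)),
      Filter.Tendsto (fun t => |k t s - k τ s|) (nhdsWithin τ (Icc (0:ℝ) 1)) (nhds 0))
    (ha : 0 ≤ a) (hab : a ≤ b) (hb : b ≤ 1)
    (hΦ_meas : Measurable Φ)
    (hΦ_bdd : ∃ C, ∀ᵐ s ∂(volume.restrict (Icc (0:ℝ) 1)), |Φ s| ≤ C)
    (hc₁ : c₁ ∈ Ioc (0:ℝ) 1)
    (hkΦ_abs : ∀ t ∈ Icc (0:ℝ) 1, ∀ᵐ s ∂(volume.restrict (Icc (0:ℝ) 1)), |k t s| ≤ Φ s)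
    (hkΦ_low : ∀ t ∈ Icc a b, ∀ᵐ s ∂(volume.restrict (Icc (0:ℝ) 1)), c₁ * Φ s ≤ k t s)
    (hg_meas : Measurable g)
    (hg_nonneg : ∀ᵐ s ∂(volume.restrict (Icc (0:ℝ) 1)), 0 ≤ g s)
    (hgΦ_int : IntegrableOn (fun s => g s * Φ s) (Icc (0:ℝ) 1))
    (hΦg_pos : 0 < ∫ s in a..b, Φ s * g s)
    (hf_meas : ∀ u : ℝ, Measurable (fun t => f t u))
    (hf_cont : ∀ᵐ t ∂(volume.restrict (Icc (0:ℝ) 1)), Continuous (f t))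
    (hf_nonneg : ∀ t u : ℝ, 0 ≤ f t u)
    (hf_bdd : ∀ r > 0, ∃ C, ∀ᵐ t ∂(volume.restrict (Icc (0:ℝ) 1)), ∀ u ∈ Icc (-r) r, f t u ≤ C)
    (hγ_cont : ContinuousOn γ (Icc (0:ℝ) 1))
    (hc₂ : c₂ ∈ Ioc (0:ℝ) 1)
    (hγ_low : ∀ t ∈ Icc a b, c₂ * nrm γ ≤ γ t)
    (hc : c = min c₁ c₂)
    (hK : K = {u : ℝ → ℝ | ContinuousOn u (Icc (0:ℝ) 1) ∧ c * nrm u ≤ minOnIcc u a b})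
    (hH_nonneg : ∀ u ∈ K, 0 ≤ H u)
    (hH_cont : ∀ u ∈ K, ∀ ε > 0, ∃ δ > 0, ∀ v ∈ K,
      nrm (fun t => u t - v t) < δ → |H u - H v| < ε)
    (hH_bdd : ∀ M : ℝ, ∃ M', ∀ u ∈ K, nrm u ≤ M → H u ≤ M')
    (μA : Measure ℝ) (hμA_fin : IsFiniteMeasure μA) (hμA_supp : μA ((Icc (0:ℝ) 1)ᶜ) = 0)
    (hαγ : (∫ t, γ t ∂μA) < 1)
    (hHα : ∀ u ∈ K, H u ≤ ∫ t, u t ∂μA)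
    (hf_lt : ∀ t ∈ Icc (0:ℝ) 1, ∀ u : ℝ, u ≠ 0 →
      f t u < (sSup ((fun t' => |γ t'| / (1 - ∫ t'', γ t'' ∂μA) *
        (∫ s in (0:ℝ)..1, (∫ t'', k t'' s ∂μA) * g s) +
        ∫ s in (0:ℝ)..1, |k t' s| * g s) '' Icc (0:ℝ) 1))⁻¹ * |u|) :
    ∀ u ∈ K, (∀ t ∈ Icc (0:ℝ) 1, u t = Tham k g f γ H u t) →
      ∀ t ∈ Icc (0:ℝ) 1, u t = 0 :=
  stmt7_general k g f Φ γ a b c₁ c₂ c H K hk_meas hk_cont ha hab hb hc₁ hkΦ_abs hkΦ_low hg_meas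
    hg_nonneg hgΦ_int hf_meas hf_cont hf_nonneg hγ_cont hc hK hH_nonneg μA hμA_fin hμA_supp hαγ hHα
    hf_lt
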